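/- Let η, δ ∈ [0,1] and let (A_i)_{i∈I} be a finite family of N×N complex matrices with Σ_i A_i† A_i = 1 satisfying Σ_i |Tr(A_i F)/N|² ≥ 1 − η (C ∈ S3(η)). Let G ⊆ ZMod N and let α : ZMod N → ℂ satisfy Σ_{g∈ZMod N} |α_g|² = 1 and Σ_{g∈G} |α_g|² = 1 − δ. For l ∈ ZMod N set ψ_l = Σ_{g∈ZMod N} α_g · f_{g+l} and φ_l = Σ_{g∈ZMod N} α_g · e_{g+l}. Then Σ_{i∈I} | (1/N) Σ_{l∈ZMod N} ⟨φ_l, A_i ψ_l⟩ − (1−δ)·Tr(A_i F)/N |² ≤ 2η·|G|² + 18δ. (That is, E_l[⟨φ_l| A_i |ψ_l⟩] = (1−δ)·E_l[⟨e_l| A_i |f_l⟩] + Err_i with Σ_i |Err_i|² ≤ 2η|G|² + 18δ.) -/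

import Mathlib

open scoped BigOperators ComplexConjugate
open Finset Matrix

/-- The `N × N` quantum Fourier transform matrix, with entries `F j k = ω^{jk} / √N`,
where `ω = exp(2πi/N)`. -/
noncomputable def QFT (N : ℕ) [NeZero N] : Matrix (ZMod N) (ZMod N) ℂ :=
  fun j k => Complex.exp (2 * (Real.pi : ℂ) * Complex.I * (j.val : ℂ) * (k.val : ℂ) / (N : ℂ))
    / (Real.sqrt N : ℂ)

open scoped translate

/-!
Write `τ_l` for translation by `l`, so that `φ_l = τ_l α` and `ψ_l = F (τ_l α)`. Averaging over `l`
turns `E_l ⟨φ_l, A ψ_l⟩` into `Σ_{k,g} conj α_k α_g D(k - g)`, where `D(d)` is the mean of the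
`d`-th cyclic diagonal of `A F`; in particular `D(0) = Tr(A F)/N`. Splitting `α = α_G + α_B`, the
error term is the off-diagonal part of the `G × G` block plus two cross terms containing `α_B`.

Since `(A_i F)_i` is again a Kraus family, `Σ_i Σ_d |D_i(d)|² ≤ 1`, so the S3 condition leaves
at most `η` of this mass off `d = 0`, and Cauchy–Schwarz bounds the off-diagonal part by `η |G|`.
A cross term `E_l ⟨τ_l u, A F τ_l v⟩` has `Σ_i |·|² ≤ ‖u‖² ‖v‖²` by Cauchy–Schwarz and the Kraus
identity, which gives at most `δ` for each of them.
-/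

section QFT

variable (N : ℕ) [NeZero N]

lemma QFT_apply (j k : ZMod N) : QFT N j k = ZMod.stdAddChar (j * k) / (Real.sqrt N : ℂ) := by
  have hjk : j * k = ((j.val * k.val : ℕ) : ZMod N) := by simp
  rw [QFT, ZMod.stdAddChar_apply, hjk, ZMod.toCircle_natCast]
  push_cast
  ring_nf

lemma QFT_conjTranspose_mul_self : (QFT N)ᴴ * QFT N = 1 := by
  ext a b
  have hN : (Real.sqrt N : ℂ) * (Real.sqrt N : ℂ) = N := by
    rw [← Complex.ofReal_mul, Real.mul_self_sqrt (Nat.cast_nonneg N), Complex.ofReal_natCast]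
  have hsum := AddChar.sum_mulShift (b - a) (ZMod.isPrimitive_stdAddChar N)
  simp only [mul_apply, conjTranspose_apply, QFT_apply, star_div₀, Complex.star_def,
    Complex.conj_ofReal, ← AddChar.map_neg_eq_conj, div_mul_div_comm, hN, ← sum_div,
    ← AddChar.map_add_eq_mul, ZMod.card, one_apply, sub_eq_zero] at hsum ⊢
  simp_rw [neg_add_eq_sub, ← mul_sub, hsum, eq_comm (a := a)]
  split_ifs <;> simp [NeZero.ne]

end QFT

section SumOfSquares

variable {ι 𝕜 : Type*} [RCLike 𝕜]

lemma norm_sum_mul_sq_le (s : Finset ι) (x y : ι → 𝕜) :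
    ‖∑ i ∈ s, x i * y i‖ ^ 2 ≤ (∑ i ∈ s, ‖x i‖ ^ 2) * ∑ i ∈ s, ‖y i‖ ^ 2 := by
  calc ‖∑ i ∈ s, x i * y i‖ ^ 2 ≤ (∑ i ∈ s, ‖x i‖ * ‖y i‖) ^ 2 := by
        gcongr
        exact (norm_sum_le _ _).trans_eq (by simp only [norm_mul])
    _ ≤ _ := sum_mul_sq_le_sq_mul_sq _ _ _

lemma norm_mean_sq_le [Fintype ι] (z : ι → 𝕜) :
    ‖(Fintype.card ι : 𝕜)⁻¹ * ∑ i, z i‖ ^ 2 ≤ (Fintype.card ι : ℝ)⁻¹ * ∑ i, ‖z i‖ ^ 2 := by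
  have h := norm_sum_mul_sq_le univ (fun _ => (1 : 𝕜)) z
  simp only [one_mul, norm_one, one_pow, sum_const, card_univ, nsmul_eq_mul, mul_one] at h
  rw [norm_mul, mul_pow, norm_inv, RCLike.norm_natCast]
  rcases (Fintype.card ι).eq_zero_or_pos with h0 | hpos
  · simp [h0]
  · calc ((Fintype.card ι : ℝ)⁻¹) ^ 2 * ‖∑ i, z i‖ ^ 2
          ≤ ((Fintype.card ι : ℝ)⁻¹) ^ 2 * (Fintype.card ι * ∑ i, ‖z i‖ ^ 2) := by gcongr
      _ = _ := by field_simp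

lemma sum_norm_sq_indicator [Fintype ι] (s : Finset ι) (a : ι → 𝕜) :
    ∑ t, ‖(s : Set ι).indicator a t‖ ^ 2 = ∑ t ∈ s, ‖a t‖ ^ 2 := by
  classical
  simp [Set.indicator_apply, apply_ite, sum_ite_mem]

lemma norm_add_add_sq_le {E : Type*} [SeminormedAddCommGroup E] (a b c : E) :
    ‖a + b + c‖ ^ 2 ≤ 2 * ‖a‖ ^ 2 + 4 * ‖b‖ ^ 2 + 4 * ‖c‖ ^ 2 := by
  have h : ‖a + b + c‖ ≤ ‖a‖ + ‖b‖ + ‖c‖ := norm_add₃_le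
  nlinarith [norm_nonneg (a + b + c), sq_nonneg (‖a‖ - ‖b‖ - ‖c‖), sq_nonneg (‖b‖ - ‖c‖)]

end SumOfSquares

section Kraus

variable {n I 𝕜 : Type*} [Fintype n] [Fintype I] [RCLike 𝕜]

lemma star_dotProduct_self_eq (v : n → 𝕜) : star v ⬝ᵥ v = ((∑ t, ‖v t‖ ^ 2 : ℝ) : 𝕜) := by
  simp [dotProduct, RCLike.conj_mul]

lemma star_mulVec_dotProduct_mulVec (A : Matrix n n 𝕜) (v : n → 𝕜) :
    star (A *ᵥ v) ⬝ᵥ (A *ᵥ v) = star v ⬝ᵥ ((Aᴴ * A) *ᵥ v) := by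
  rw [star_mulVec, ← dotProduct_mulVec, mulVec_mulVec]

variable [DecidableEq n]

lemma sum_norm_sq_mulVec_of_kraus {A : I → Matrix n n 𝕜} (hK : ∑ i, (A i)ᴴ * A i = 1)
    (v : n → 𝕜) : ∑ i, ∑ t, ‖(A i *ᵥ v) t‖ ^ 2 = ∑ t, ‖v t‖ ^ 2 := by
  apply RCLike.ofReal_injective (K := 𝕜)
  calc ((∑ i, ∑ t, ‖(A i *ᵥ v) t‖ ^ 2 : ℝ) : 𝕜) = ∑ i, star (A i *ᵥ v) ⬝ᵥ (A i *ᵥ v) := by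
        simp only [RCLike.ofReal_sum, star_dotProduct_self_eq]
    _ = star v ⬝ᵥ ((∑ i, (A i)ᴴ * A i) *ᵥ v) := by
        simp only [star_mulVec_dotProduct_mulVec, sum_mulVec, dotProduct_sum]
    _ = _ := by rw [hK, one_mulVec, star_dotProduct_self_eq]

lemma sum_norm_sq_apply_of_kraus {A : I → Matrix n n 𝕜}
    (hK : ∑ i, (A i)ᴴ * A i = 1) (l : n) : ∑ i, ∑ t, ‖A i t l‖ ^ 2 = 1 := by
  simpa [mulVec_single_one, Pi.single_apply, apply_ite] using
    sum_norm_sq_mulVec_of_kraus hK (Pi.single l 1)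

lemma kraus_mul_unitary {A : I → Matrix n n 𝕜} (hK : ∑ i, (A i)ᴴ * A i = 1) {U : Matrix n n 𝕜}
    (hU : Uᴴ * U = 1) : ∑ i, (A i * U)ᴴ * (A i * U) = 1 := by
  simp only [conjTranspose_mul, Matrix.mul_assoc, ← Matrix.mul_sum]
  simp only [← Matrix.mul_assoc, ← Matrix.sum_mul, hK, Matrix.mul_one, hU]

end Kraus

section TranslationAverage

variable {Γ I 𝕜 : Type*} [AddCommGroup Γ] [Fintype Γ] [Fintype I] [RCLike 𝕜]

def diagAvg (M : Matrix Γ Γ 𝕜) (d : Γ) : 𝕜 := (Fintype.card Γ : 𝕜)⁻¹ * ∑ l, M (d + l) l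

lemma diagAvg_zero (M : Matrix Γ Γ 𝕜) : diagAvg M 0 = M.trace / Fintype.card Γ := by
  simp [diagAvg, trace, div_eq_inv_mul]

lemma sum_apply_add_add (M : Matrix Γ Γ 𝕜) (k g : Γ) :
    ∑ l, M (k + l) (g + l) = ∑ l, M (k - g + l) l :=
  Fintype.sum_equiv (Equiv.addLeft g) _ _ fun l => by
    simp only [Equiv.coe_addLeft]; congr 1; abel

/-- With `M = A F` and `u = v = α` this is the paper's `E_l ⟨φ_l| A |ψ_l⟩`. -/
def translateAvg (M : Matrix Γ Γ 𝕜) (u v : Γ → 𝕜) : 𝕜 :=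
  (Fintype.card Γ : 𝕜)⁻¹ * ∑ l, star (τ l u) ⬝ᵥ (M *ᵥ τ l v)

lemma star_translate_dotProduct_mulVec_translate (M : Matrix Γ Γ 𝕜) (u v : Γ → 𝕜) (l : Γ) :
    star (τ l u) ⬝ᵥ (M *ᵥ τ l v) = ∑ k, ∑ g, conj (u k) * v g * M (k + l) (g + l) := by
  simp only [dotProduct, mulVec, mul_sum]
  rw [← Equiv.sum_comp (Equiv.addRight l)]
  refine sum_congr rfl fun k _ => ?_
  rw [← Equiv.sum_comp (Equiv.addRight l)]
  refine sum_congr rfl fun g _ => ?_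
  simp only [Equiv.coe_addRight, Pi.star_apply, translate_apply, add_sub_cancel_right,
    RCLike.star_def]
  ring

lemma translateAvg_eq_sum_diagAvg (M : Matrix Γ Γ 𝕜) (u v : Γ → 𝕜) :
    translateAvg M u v = ∑ k, ∑ g, conj (u k) * v g * diagAvg M (k - g) := by
  simp only [translateAvg, star_translate_dotProduct_mulVec_translate, diagAvg,
    ← sum_apply_add_add, mul_sum]
  rw [sum_comm]
  refine sum_congr rfl fun k _ => ?_
  rw [sum_comm]
  refine sum_congr rfl fun g _ => ?_
  refine sum_congr rfl fun l _ => ?_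
  ring

lemma translateAvg_add_left (M : Matrix Γ Γ 𝕜) (u u' v : Γ → 𝕜) :
    translateAvg M (u + u') v = translateAvg M u v + translateAvg M u' v := by
  simp only [translateAvg, translate_add_right, star_add, add_dotProduct, sum_add_distrib,
    mul_add]

lemma translateAvg_add_right (M : Matrix Γ Γ 𝕜) (u v v' : Γ → 𝕜) :
    translateAvg M u (v + v') = translateAvg M u v + translateAvg M u v' := by
  simp only [translateAvg, translate_add_right, mulVec_add, dotProduct_add, sum_add_distrib,
    mul_add]

lemma sum_norm_sq_translate (l : Γ) (v : Γ → 𝕜) : ∑ t, ‖τ l v t‖ ^ 2 = ∑ t, ‖v t‖ ^ 2 :=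
  sum_translate l fun t => ‖v t‖ ^ 2

variable [DecidableEq Γ]

lemma sum_norm_sq_translateAvg_le {M : I → Matrix Γ Γ 𝕜} (hK : ∑ i, (M i)ᴴ * M i = 1)
    (u v : Γ → 𝕜) :
    ∑ i, ‖translateAvg (M i) u v‖ ^ 2 ≤ (∑ t, ‖u t‖ ^ 2) * ∑ t, ‖v t‖ ^ 2 := by
  set c : ℝ := (Fintype.card Γ : ℝ)⁻¹
  have hcs (i : I) (l : Γ) : ‖star (τ l u) ⬝ᵥ (M i *ᵥ τ l v)‖ ^ 2
      ≤ (∑ t, ‖u t‖ ^ 2) * ∑ t, ‖(M i *ᵥ τ l v) t‖ ^ 2 := by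
    simpa only [dotProduct, Pi.star_apply, norm_star, sum_norm_sq_translate] using
      norm_sum_mul_sq_le univ (star (τ l u)) (M i *ᵥ τ l v)
  calc ∑ i, ‖translateAvg (M i) u v‖ ^ 2
      ≤ ∑ i, c * ∑ l, (∑ t, ‖u t‖ ^ 2) * ∑ t, ‖(M i *ᵥ τ l v) t‖ ^ 2 := by
        refine sum_le_sum fun i _ => (norm_mean_sq_le _).trans ?_
        gcongr with l
        exact hcs i l
    _ = c * ∑ l, (∑ t, ‖u t‖ ^ 2) * ∑ i, ∑ t, ‖(M i *ᵥ τ l v) t‖ ^ 2 := by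
        simp only [← mul_sum]
        rw [sum_comm]
    _ = c * ∑ _l : Γ, (∑ t, ‖u t‖ ^ 2) * ∑ t, ‖v t‖ ^ 2 := by
        simp only [sum_norm_sq_mulVec_of_kraus hK, sum_norm_sq_translate]
    _ = _ := by
        rw [sum_const, card_univ, nsmul_eq_mul, ← mul_assoc, inv_mul_cancel₀ (by simp), one_mul]

lemma sum_sum_norm_sq_diagAvg_le {M : I → Matrix Γ Γ 𝕜} (hK : ∑ i, (M i)ᴴ * M i = 1) :
    ∑ i, ∑ d, ‖diagAvg (M i) d‖ ^ 2 ≤ 1 := by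
  set c : ℝ := (Fintype.card Γ : ℝ)⁻¹
  calc ∑ i, ∑ d, ‖diagAvg (M i) d‖ ^ 2 ≤ ∑ i, ∑ d, c * ∑ l, ‖M i (d + l) l‖ ^ 2 :=
        sum_le_sum fun i _ => sum_le_sum fun d _ => norm_mean_sq_le _
    _ = c * ∑ i, ∑ l, ∑ d, ‖M i (d + l) l‖ ^ 2 := by
        simp only [← mul_sum]
        exact congr_arg _ (sum_congr rfl fun i _ => sum_comm)
    _ = c * ∑ l, ∑ i, ∑ t, ‖M i t l‖ ^ 2 := by
        rw [sum_comm]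
        congr! 3 with l _ i
        exact Fintype.sum_equiv (Equiv.addRight l) _ _ fun _ => rfl
    _ = 1 := by
        simp only [sum_norm_sq_apply_of_kraus hK, sum_const, card_univ, nsmul_eq_mul, mul_one]
        exact inv_mul_cancel₀ (by simp)

lemma sum_offDiag_norm_sq_apply_sub_le (G : Finset Γ) (f : Γ → 𝕜) :
    ∑ p ∈ G.offDiag, ‖f (p.1 - p.2)‖ ^ 2 ≤ #G * ∑ d ∈ univ.erase 0, ‖f d‖ ^ 2 := by
  have hinj : Set.InjOn (fun p : Γ × Γ => (p.1, p.1 - p.2)) G.offDiag := by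
    intro p _ q _ h
    simp only [Prod.mk.injEq] at h
    exact Prod.ext h.1 (by simpa [h.1] using h.2)
  have hsub : G.offDiag.image (fun p : Γ × Γ => (p.1, p.1 - p.2)) ⊆ G ×ˢ univ.erase 0 := by
    intro q hq
    obtain ⟨p, hp, rfl⟩ := mem_image.mp hq
    rw [mem_offDiag] at hp
    simpa [sub_eq_zero] using ⟨hp.1, hp.2.2⟩
  calc ∑ p ∈ G.offDiag, ‖f (p.1 - p.2)‖ ^ 2
      = ∑ q ∈ G.offDiag.image (fun p : Γ × Γ => (p.1, p.1 - p.2)), ‖f q.2‖ ^ 2 :=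
        (sum_image (f := fun q => ‖f q.2‖ ^ 2) hinj).symm
    _ ≤ ∑ q ∈ G ×ˢ univ.erase 0, ‖f q.2‖ ^ 2 :=
        sum_le_sum_of_subset_of_nonneg hsub fun _ _ _ => by positivity
    _ = #G * ∑ d ∈ univ.erase 0, ‖f d‖ ^ 2 := by
        simp only [sum_product, sum_const, nsmul_eq_mul]

lemma norm_sq_sum_offDiag_le (G : Finset Γ) (a f : Γ → 𝕜) :
    ‖∑ p ∈ G.offDiag, conj (a p.1) * a p.2 * f (p.1 - p.2)‖ ^ 2
      ≤ (∑ k ∈ G, ‖a k‖ ^ 2) ^ 2 * (#G * ∑ d ∈ univ.erase 0, ‖f d‖ ^ 2) := by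
  have hmass : ∑ p ∈ G.offDiag, ‖conj (a p.1) * a p.2‖ ^ 2 ≤ (∑ k ∈ G, ‖a k‖ ^ 2) ^ 2 :=
    calc ∑ p ∈ G.offDiag, ‖conj (a p.1) * a p.2‖ ^ 2
        ≤ ∑ p ∈ G ×ˢ G, ‖conj (a p.1) * a p.2‖ ^ 2 :=
          sum_le_sum_of_subset_of_nonneg (G.diag_union_offDiag ▸ subset_union_right)
            fun _ _ _ => by positivity
      _ = (∑ k ∈ G, ‖a k‖ ^ 2) ^ 2 := by
          rw [sq, sum_mul_sum, sum_product]
          simp only [norm_mul, RCLike.norm_conj, mul_pow]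
  calc _ ≤ (∑ p ∈ G.offDiag, ‖conj (a p.1) * a p.2‖ ^ 2) * ∑ p ∈ G.offDiag, ‖f (p.1 - p.2)‖ ^ 2 :=
        norm_sum_mul_sq_le _ _ _
    _ ≤ _ := by
        gcongr
        exact sum_offDiag_norm_sq_apply_sub_le G f

lemma translateAvg_indicator_self (M : Matrix Γ Γ 𝕜) (G : Finset Γ) (a : Γ → 𝕜) :
    translateAvg M ((G : Set Γ).indicator a) ((G : Set Γ).indicator a)
      = (∑ k ∈ G, ‖a k‖ ^ 2 : ℝ) * diagAvg M 0
        + ∑ p ∈ G.offDiag, conj (a p.1) * a p.2 * diagAvg M (p.1 - p.2) := by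
  have hdiag : ∑ p ∈ G.diag, conj (a p.1) * a p.2 * diagAvg M (p.1 - p.2)
      = (∑ k ∈ G, ‖a k‖ ^ 2 : ℝ) * diagAvg M 0 := by
    simp [sum_diag, RCLike.conj_mul, sum_mul]
  rw [translateAvg_eq_sum_diagAvg, ← hdiag, ← sum_union G.disjoint_diag_offDiag,
    G.diag_union_offDiag, sum_product]
  simp only [Set.indicator_apply, mem_coe, apply_ite (starRingEnd 𝕜), map_zero, ite_mul, zero_mul,
    mul_ite, mul_zero, sum_ite_mem, univ_inter, sum_ite_irrel, sum_const_zero]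

lemma sum_sum_erase_norm_sq_diagAvg_le {M : I → Matrix Γ Γ 𝕜} (hK : ∑ i, (M i)ᴴ * M i = 1)
    {η : ℝ} (h : 1 - η ≤ ∑ i, ‖diagAvg (M i) 0‖ ^ 2) :
    ∑ i, ∑ d ∈ univ.erase 0, ‖diagAvg (M i) d‖ ^ 2 ≤ η := by
  have hsum := sum_sum_norm_sq_diagAvg_le hK
  simp only [← add_sum_erase _ _ (mem_univ (0 : Γ)), sum_add_distrib] at hsum
  linarith

lemma sum_norm_sq_sum_offDiag_diagAvg_le {M : I → Matrix Γ Γ 𝕜} (G : Finset Γ) (a : Γ → 𝕜)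
    (ha : ∑ k ∈ G, ‖a k‖ ^ 2 ≤ 1) :
    ∑ i, ‖∑ p ∈ G.offDiag, conj (a p.1) * a p.2 * diagAvg (M i) (p.1 - p.2)‖ ^ 2
      ≤ #G * ∑ i, ∑ d ∈ univ.erase 0, ‖diagAvg (M i) d‖ ^ 2 := by
  rw [mul_sum]
  refine sum_le_sum fun i _ => (norm_sq_sum_offDiag_le G a _).trans ?_
  have h0 : 0 ≤ ∑ k ∈ G, ‖a k‖ ^ 2 := by positivity
  have h1 : (∑ k ∈ G, ‖a k‖ ^ 2) ^ 2 ≤ 1 := pow_le_one₀ h0 ha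
  exact mul_le_of_le_one_left (by positivity) h1

lemma translateAvg_self_sub_eq (M : Matrix Γ Γ 𝕜) (G : Finset Γ) (a : Γ → 𝕜) :
    translateAvg M a a - (∑ k ∈ G, ‖a k‖ ^ 2 : ℝ) * diagAvg M 0
      = ∑ p ∈ G.offDiag, conj (a p.1) * a p.2 * diagAvg M (p.1 - p.2)
        + translateAvg M ((G : Set Γ).indicator a) (((Gᶜ : Finset Γ) : Set Γ).indicator a)
        + translateAvg M (((Gᶜ : Finset Γ) : Set Γ).indicator a) a := by
  have ha : (G : Set Γ).indicator a + ((Gᶜ : Finset Γ) : Set Γ).indicator a = a := by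
    rw [coe_compl, Set.indicator_self_add_compl]
  have hsplit_left : translateAvg M a a
      = translateAvg M ((G : Set Γ).indicator a) a
        + translateAvg M (((Gᶜ : Finset Γ) : Set Γ).indicator a) a := by
    rw [← translateAvg_add_left, ha]
  have hsplit_right : translateAvg M ((G : Set Γ).indicator a) a
      = translateAvg M ((G : Set Γ).indicator a) ((G : Set Γ).indicator a)
        + translateAvg M ((G : Set Γ).indicator a) (((Gᶜ : Finset Γ) : Set Γ).indicator a) := by
    rw [← translateAvg_add_right, ha]
  rw [hsplit_left, hsplit_right, translateAvg_indicator_self]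
  ring

theorem sum_norm_sq_translateAvg_sub_le {M : I → Matrix Γ Γ 𝕜} (hK : ∑ i, (M i)ᴴ * M i = 1)
    {η δ : ℝ} (hS : 1 - η ≤ ∑ i, ‖diagAvg (M i) 0‖ ^ 2) (G : Finset Γ) (a : Γ → 𝕜)
    (ha1 : ∑ k, ‖a k‖ ^ 2 = 1) (ha2 : ∑ k ∈ G, ‖a k‖ ^ 2 = 1 - δ) :
    ∑ i, ‖translateAvg (M i) a a - ((1 - δ : ℝ) : 𝕜) * diagAvg (M i) 0‖ ^ 2
      ≤ 2 * η * #G ^ 2 + 18 * δ := by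
  set aG := (G : Set Γ).indicator a
  set aB := ((Gᶜ : Finset Γ) : Set Γ).indicator a
  set Off : I → 𝕜 := fun i => ∑ p ∈ G.offDiag, conj (a p.1) * a p.2 * diagAvg (M i) (p.1 - p.2)
  have haB : ∑ t, ‖aB t‖ ^ 2 = δ := by
    rw [sum_norm_sq_indicator]
    linarith [sum_add_sum_compl G fun g => ‖a g‖ ^ 2]
  have haG : ∑ t, ‖aG t‖ ^ 2 = 1 - δ := (sum_norm_sq_indicator G a).trans ha2
  have hR := sum_sum_erase_norm_sq_diagAvg_le hK hS
  have hη : 0 ≤ η := le_trans (sum_nonneg fun _ _ => sum_nonneg fun _ _ => by positivity) hR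
  have hδ : 0 ≤ δ := haB ▸ by positivity
  have hOff : ∑ i, ‖Off i‖ ^ 2 ≤ #G * η :=
    (sum_norm_sq_sum_offDiag_diagAvg_le G a (by linarith)).trans (by gcongr)
  have hX : ∑ i, ‖translateAvg (M i) aG aB‖ ^ 2 ≤ (1 - δ) * δ := by
    simpa only [haG, haB] using sum_norm_sq_translateAvg_le hK aG aB
  have hY : ∑ i, ‖translateAvg (M i) aB a‖ ^ 2 ≤ δ * 1 := by
    simpa only [haB, ha1] using sum_norm_sq_translateAvg_le hK aB a
  have hG : (#G : ℝ) ≤ #G ^ 2 := by exact_mod_cast Nat.le_self_pow two_ne_zero _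
  calc _ = ∑ i, ‖Off i + translateAvg (M i) aG aB + translateAvg (M i) aB a‖ ^ 2 := by
        simp only [← ha2, translateAvg_self_sub_eq, Off, aG, aB]
    _ ≤ ∑ i, (2 * ‖Off i‖ ^ 2 + 4 * ‖translateAvg (M i) aG aB‖ ^ 2
          + 4 * ‖translateAvg (M i) aB a‖ ^ 2) :=
        sum_le_sum fun i _ => norm_add_add_sq_le _ _ _
    _ = 2 * ∑ i, ‖Off i‖ ^ 2 + 4 * ∑ i, ‖translateAvg (M i) aG aB‖ ^ 2
          + 4 * ∑ i, ‖translateAvg (M i) aB a‖ ^ 2 := by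
        simp only [sum_add_distrib, mul_sum]
    _ ≤ _ := by nlinarith [mul_le_mul_of_nonneg_left hG hη]

end TranslationAverage

lemma sum_mul_ite_eq_translate {Γ R : Type*} [AddCommGroup Γ] [Fintype Γ] [DecidableEq Γ]
    [Semiring R] (u : Γ → R) (l t : Γ) :
    ∑ g, u g * (if t = g + l then 1 else 0) = τ l u t := by
  simp [← sub_eq_iff_eq_add]

lemma mulVec_translate {Γ R : Type*} [AddCommGroup Γ] [Fintype Γ] [CommSemiring R]
    (U : Matrix Γ Γ R) (u : Γ → R) (l : Γ) :
    U *ᵥ τ l u = fun s => ∑ g, u g * U s (g + l) := by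
  ext s
  simp only [mulVec, dotProduct, translate_apply, mul_comm (U s _)]
  exact Fintype.sum_equiv (Equiv.subRight l) _ _ fun t => by simp

lemma translateAvg_mul_eq {Γ 𝕜 : Type*} [AddCommGroup Γ] [Fintype Γ] [DecidableEq Γ] [RCLike 𝕜]
    (B U : Matrix Γ Γ 𝕜) (u : Γ → 𝕜) :
    translateAvg (B * U) u u = (Fintype.card Γ : 𝕜)⁻¹ * ∑ l, ∑ t,
      conj (∑ g, u g * (if t = g + l then 1 else 0))
        * (B *ᵥ fun s => ∑ g, u g * U s (g + l)) t := by
  simp only [sum_mul_ite_eq_translate, ← mulVec_translate, mulVec_mulVec, translateAvg,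
    dotProduct, Pi.star_apply, RCLike.star_def]

theorem error_term_bound_general (N : ℕ) [NeZero N] (η δ : ℝ)
    (I : Type) [Fintype I] (A : I → Matrix (ZMod N) (ZMod N) ℂ)
    (hK : ∑ i : I, (A i)ᴴ * A i = 1)
    (hS3 : ∑ i : I, ‖(A i * QFT N).trace / (N : ℂ)‖ ^ 2 ≥ 1 - η)
    (G : Finset (ZMod N)) (α : ZMod N → ℂ)
    (hα1 : ∑ g : ZMod N, ‖α g‖ ^ 2 = 1)
    (hα2 : ∑ g ∈ G, ‖α g‖ ^ 2 = 1 - δ) :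
    ∑ i : I, ‖(
        (1 / N : ℂ) * (∑ l : ZMod N, ∑ t : ZMod N,
          (starRingEnd ℂ) (∑ g : ZMod N, α g * (if t = g + l then 1 else 0)) *
            ((A i *ᵥ fun s => ∑ g : ZMod N, α g * QFT N s (g + l)) t))
        - ((1 - δ : ℝ) : ℂ) * (A i * QFT N).trace / (N : ℂ))‖ ^ 2
      ≤ 2 * η * (G.card : ℝ) ^ 2 + 18 * δ := by
  have hM := kraus_mul_unitary hK (QFT_conjTranspose_mul_self N)
  have hS : 1 - η ≤ ∑ i, ‖diagAvg (A i * QFT N) 0‖ ^ 2 := by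
    simpa only [diagAvg_zero, ZMod.card] using hS3
  calc _ = ∑ i, ‖translateAvg (A i * QFT N) α α
          - ((1 - δ : ℝ) : ℂ) * diagAvg (A i * QFT N) 0‖ ^ 2 := by
        simp only [translateAvg_mul_eq, diagAvg_zero, ZMod.card, one_div, mul_div_assoc]
    _ ≤ _ := sum_norm_sq_translateAvg_sub_le hM hS G α hα1 hα2

/-- Lemma 5.3: if `C ∈ S3(η)` with Kraus operators `A i`, `G` carries all but `δ` of
the mass of `α`, `ψ_l = Σ_g α_g f_{g+l}` and `φ_l = Σ_g α_g e_{g+l}`, then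
`E_l[⟨φ_l| A_i |ψ_l⟩] = (1−δ)·Tr(A_i F)/N + Err_i` with `Σ_i |Err_i|² ≤ 2η|G|² + 18δ`. -/
theorem error_term_bound (N : ℕ) [NeZero N] (η δ : ℝ)
    (hη : η ∈ Set.Icc (0 : ℝ) 1) (hδ : δ ∈ Set.Icc (0 : ℝ) 1)
    (I : Type) [Fintype I] (A : I → Matrix (ZMod N) (ZMod N) ℂ)
    (hK : ∑ i : I, (A i)ᴴ * A i = 1)
    (hS3 : ∑ i : I, ‖(A i * QFT N).trace / (N : ℂ)‖ ^ 2 ≥ 1 - η)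
    (G : Finset (ZMod N)) (α : ZMod N → ℂ)
    (hα1 : ∑ g : ZMod N, ‖α g‖ ^ 2 = 1)
    (hα2 : ∑ g ∈ G, ‖α g‖ ^ 2 = 1 - δ) :
    ∑ i : I, ‖(
        (1 / N : ℂ) * (∑ l : ZMod N, ∑ t : ZMod N,
          (starRingEnd ℂ) (∑ g : ZMod N, α g * (if t = g + l then 1 else 0)) *
            ((A i *ᵥ fun s => ∑ g : ZMod N, α g * QFT N s (g + l)) t))
        - ((1 - δ : ℝ) : ℂ) * (A i * QFT N).trace / (N : ℂ))‖ ^ 2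
      ≤ 2 * η * (G.card : ℝ) ^ 2 + 18 * δ :=
  error_term_bound_general N η δ I A hK hS3 G α hα1 hα2
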